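/- (Proposition 3, periodic-tail stability constraint) Let η > 0, δ > 0, γ ≥ 0, t_k ∈ ℝ, x_z^k ∈ ℝ, C a positive integer, and let (v_i)_{i≥0} be a C-periodic sequence of reals (v_{i+C} = v_i for all i ≥ 0) with |v_i| ≤ γ. Define the piecewise-linear ZMP trajectory x_z(t) = x_z^k + Σ_{i=0}^∞ (ρ(t − t_{k+i}) − ρ(t − t_{k+i+1})) v_i, where ρ(t) = max(t,0) and t_{k+i} = t_k + iδ, and set x_u^k = η ∫_{t_k}^∞ e^{−η(τ−t_k)} x_z(τ) dτ. Then Σ_{i=0}^{C−1} e^{−iηδ} v_i = η · ((1 − e^{−Cηδ})/(1 − e^{−ηδ})) · (x_u^k − x_z^k). -/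

import Mathlib

open MeasureTheory Real Set Filter Topology

/-!
Each summand of `x_z` is a clipped ramp `ρ(τ - a) - ρ(τ - b)`, and the fundamental theorem of
calculus gives `∫_{t_k}^∞ e^{-η(τ-t_k)} ρ(τ - b) dτ = e^{-η(b-t_k)} / η²` for `b ≥ t_k`. The partial
sums of `x_z` are dominated by `|x_z^k| + γ ρ(τ - t_k)`, so dominated convergence exchanges sum and
integral and yields `x_u^k - x_z^k = (1 - r) / η · S` with `r = e^{-ηδ}` and `S = Σ_i rⁱ vᵢ`.
For a `C`-periodic sequence, shifting the series by one period gives `S = Σ_{i<C} rⁱ vᵢ + r^C S`.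
-/

def clippedRamp (a b t : ℝ) : ℝ := max (t - a) 0 - max (t - b) 0

section ClippedRamp

variable {a b t : ℝ}

lemma clippedRamp_nonneg (hab : a ≤ b) : 0 ≤ clippedRamp a b t :=
  sub_nonneg.2 (max_le_max_right 0 (by linarith))

lemma clippedRamp_eq_zero (ht : t ≤ a) (hab : a ≤ b) : clippedRamp a b t = 0 := by
  rw [clippedRamp, max_eq_right (by linarith), max_eq_right (by linarith), sub_self]

@[fun_prop]
lemma continuous_clippedRamp : Continuous (clippedRamp a b) := by
  unfold clippedRamp
  fun_prop

lemma sum_range_clippedRamp (t₀ δ t : ℝ) (n : ℕ) :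
    ∑ i ∈ Finset.range n, clippedRamp (t₀ + i * δ) (t₀ + (i + 1) * δ) t
      = max (t - t₀) 0 - max (t - (t₀ + n * δ)) 0 := by
  simpa [clippedRamp] using Finset.sum_range_sub' (fun i : ℕ ↦ max (t - (t₀ + i * δ)) 0) n

lemma summable_clippedRamp_mul {δ : ℝ} (hδ : 0 < δ) (v : ℕ → ℝ) (t₀ t : ℝ) :
    Summable fun i : ℕ ↦ clippedRamp (t₀ + i * δ) (t₀ + (i + 1) * δ) t * v i := by
  refine summable_of_ne_finset_zero (s := Finset.range ⌈(t - t₀) / δ⌉₊) fun i hi ↦ ?_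
  have hi : (t - t₀) / δ ≤ i :=
    (Nat.le_ceil _).trans (by exact_mod_cast (not_lt.1 (Finset.mem_range.not.1 hi)))
  rw [clippedRamp_eq_zero (by linarith [(div_le_iff₀ hδ).1 hi]) (by linarith), zero_mul]

end ClippedRamp

section RampIntegral

variable {η : ℝ} (t₀ b : ℝ)

lemma hasDerivAt_ramp_antideriv (hη : η ≠ 0) (x : ℝ) :
    HasDerivAt (fun τ ↦ -exp (-η * (τ - t₀)) * ((τ - b) / η + 1 / η ^ 2))
      (exp (-η * (x - t₀)) * (x - b)) x := by
  have hexp : HasDerivAt (fun τ ↦ exp (-η * (τ - t₀))) (exp (-η * (x - t₀)) * (-η)) x := by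
    simpa using ((hasDerivAt_id x).sub_const t₀).const_mul (-η) |>.exp
  refine (hexp.neg.mul (((hasDerivAt_id x).sub_const b).div_const η |>.add_const (1 / η ^ 2)))
    |>.congr_deriv ?_
  simp only [Pi.neg_apply, id]
  field_simp
  ring

lemma tendsto_ramp_antideriv (hη : 0 < η) :
    Tendsto (fun τ ↦ -exp (-η * (τ - t₀)) * ((τ - b) / η + 1 / η ^ 2)) atTop (𝓝 0) := by
  have hs : Tendsto (fun τ ↦ η * (τ - t₀)) atTop atTop :=
    (tendsto_atTop_add_const_right _ _ tendsto_id).const_mul_atTop hη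
  have hdecay := ((tendsto_pow_mul_exp_neg_atTop_nhds_zero 1).comp hs).const_mul (1 / η ^ 2) |>.add
    ((tendsto_exp_neg_atTop_nhds_zero.comp hs).const_mul ((1 / η - (b - t₀)) / η))
  rw [mul_zero, mul_zero, add_zero] at hdecay
  refine (neg_zero (G := ℝ) ▸ hdecay.neg).congr fun τ ↦ ?_
  simp only [Function.comp_apply, pow_one, neg_mul]
  field_simp
  ring

lemma integrableOn_exp_mul_ramp (hη : 0 < η) :
    IntegrableOn (fun τ ↦ exp (-η * (τ - t₀)) * max (τ - b) 0) (Ioi t₀) := by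
  have hFTC := integrableOn_Ioi_deriv_of_nonneg'
    (fun x _ ↦ hasDerivAt_ramp_antideriv t₀ b hη.ne' x)
    (fun τ hτ ↦ mul_nonneg (exp_pos _).le (sub_nonneg.2 hτ.out.le)) (tendsto_ramp_antideriv t₀ b hη)
  refine (hFTC.congr_fun (fun τ hτ ↦ ?_) measurableSet_Ioi).of_forall_sdiff_eq_zero
    measurableSet_Ioi fun τ hτ ↦ ?_
  · rw [max_eq_left (sub_nonneg.2 hτ.out.le)]
  · rw [max_eq_right (sub_nonpos.2 (not_lt.1 hτ.2)), mul_zero]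

lemma integral_exp_mul_ramp (hη : 0 < η) (hb : t₀ ≤ b) :
    ∫ τ in Ioi t₀, exp (-η * (τ - t₀)) * max (τ - b) 0 = exp (-η * (b - t₀)) / η ^ 2 := by
  rw [setIntegral_eq_of_subset_of_forall_sdiff_eq_zero measurableSet_Ioi (Ioi_subset_Ioi hb)
      fun τ hτ ↦ by rw [max_eq_right (sub_nonpos.2 (not_lt.1 hτ.2)), mul_zero],
    setIntegral_congr_fun measurableSet_Ioi
      fun τ hτ ↦ by rw [max_eq_left (sub_nonneg.2 (le_of_lt hτ))],
    integral_Ioi_of_hasDerivAt_of_nonneg' (fun x _ ↦ hasDerivAt_ramp_antideriv t₀ b hη.ne' x)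
      (fun τ hτ ↦ mul_nonneg (exp_pos _).le (sub_nonneg.2 hτ.out.le))
      (tendsto_ramp_antideriv t₀ b hη)]
  field_simp
  ring

end RampIntegral

section Laplace

variable {η : ℝ} (t₀ : ℝ)

lemma exp_neg_mul_sub_eq (τ : ℝ) : exp (-η * (τ - t₀)) = exp (η * t₀) * exp (-η * τ) := by
  rw [← exp_add]
  ring_nf

lemma integrableOn_exp_neg_mul_sub (hη : 0 < η) :
    IntegrableOn (fun τ ↦ exp (-η * (τ - t₀))) (Ioi t₀) :=
  IntegrableOn.congr_fun ((integrableOn_exp_mul_Ioi (neg_lt_zero.2 hη) t₀).const_mul _)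
    (fun τ _ ↦ (exp_neg_mul_sub_eq t₀ τ).symm) measurableSet_Ioi

lemma integral_exp_neg_mul_sub (hη : 0 < η) :
    ∫ τ in Ioi t₀, exp (-η * (τ - t₀)) = 1 / η := by
  simp_rw [exp_neg_mul_sub_eq t₀]
  rw [integral_const_mul, integral_exp_mul_Ioi (neg_lt_zero.2 hη), mul_div_assoc',
    mul_neg, ← exp_add]
  field_simp
  simp

lemma exp_mul_clippedRamp_eq (a b : ℝ) :
    (fun τ ↦ exp (-η * (τ - t₀)) * clippedRamp a b τ)
      = fun τ ↦ exp (-η * (τ - t₀)) * max (τ - a) 0 - exp (-η * (τ - t₀)) * max (τ - b) 0 :=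
  funext fun _ ↦ mul_sub _ _ _

lemma integrableOn_exp_mul_clippedRamp (hη : 0 < η) (a b : ℝ) :
    IntegrableOn (fun τ ↦ exp (-η * (τ - t₀)) * clippedRamp a b τ) (Ioi t₀) := by
  rw [exp_mul_clippedRamp_eq]
  exact (integrableOn_exp_mul_ramp t₀ a hη).sub (integrableOn_exp_mul_ramp t₀ b hη)

lemma integral_exp_mul_clippedRamp (hη : 0 < η) {a b : ℝ} (ha : t₀ ≤ a) (hb : t₀ ≤ b) :
    ∫ τ in Ioi t₀, exp (-η * (τ - t₀)) * clippedRamp a b τ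
      = (exp (-η * (a - t₀)) - exp (-η * (b - t₀))) / η ^ 2 := by
  rw [exp_mul_clippedRamp_eq, integral_sub (integrableOn_exp_mul_ramp t₀ a hη)
    (integrableOn_exp_mul_ramp t₀ b hη), integral_exp_mul_ramp t₀ a hη ha,
    integral_exp_mul_ramp t₀ b hη hb, sub_div]

end Laplace

section RampSeries

variable {η δ M : ℝ} {v : ℕ → ℝ} (t₀ x₀ : ℝ)

lemma abs_sum_clippedRamp_mul_le (hδ : 0 ≤ δ) (hv : ∀ i, |v i| ≤ M) (t : ℝ) (n : ℕ) :
    |∑ i ∈ Finset.range n, clippedRamp (t₀ + i * δ) (t₀ + (i + 1) * δ) t * v i|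
      ≤ M * max (t - t₀) 0 := by
  have hgrid (i : ℕ) : t₀ + i * δ ≤ t₀ + (i + 1) * δ := by linarith
  calc _ ≤ ∑ i ∈ Finset.range n, clippedRamp (t₀ + i * δ) (t₀ + (i + 1) * δ) t * M := by
        refine (Finset.abs_sum_le_sum_abs _ _).trans (Finset.sum_le_sum fun i _ ↦ ?_)
        rw [abs_mul, abs_of_nonneg (clippedRamp_nonneg (hgrid i))]
        exact mul_le_mul_of_nonneg_left (hv i) (clippedRamp_nonneg (hgrid i))
    _ = M * (max (t - t₀) 0 - max (t - (t₀ + n * δ)) 0) := by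
        rw [← Finset.sum_mul, sum_range_clippedRamp, mul_comm]
    _ ≤ M * max (t - t₀) 0 :=
        mul_le_mul_of_nonneg_left (sub_le_self _ (le_max_right _ _))
          ((abs_nonneg _).trans (hv 0))

lemma integral_exp_mul_sum_clippedRamp (hη : 0 < η) (hδ : 0 ≤ δ) (n : ℕ) :
    ∫ τ in Ioi t₀, exp (-η * (τ - t₀))
        * (x₀ + ∑ i ∈ Finset.range n, clippedRamp (t₀ + i * δ) (t₀ + (i + 1) * δ) τ * v i)
      = x₀ / η + (1 - exp (-η * δ)) / η ^ 2 * ∑ i ∈ Finset.range n, exp (-η * δ) ^ i * v i := by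
  have hterm (i : ℕ) : IntegrableOn
      (fun τ ↦ exp (-η * (τ - t₀)) * clippedRamp (t₀ + i * δ) (t₀ + (i + 1) * δ) τ * v i)
      (Ioi t₀) :=
    (integrableOn_exp_mul_clippedRamp t₀ hη _ _).mul_const _
  simp_rw [mul_add, Finset.mul_sum, ← mul_assoc]
  rw [integral_add ((integrableOn_exp_neg_mul_sub t₀ hη).mul_const _)
      (integrable_finsetSum _ fun i _ ↦ hterm i),
    integral_mul_const, integral_exp_neg_mul_sub t₀ hη, integral_finsetSum _ fun i _ ↦ hterm i]
  congr 1
  · ring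
  refine Finset.sum_congr rfl fun i _ ↦ ?_
  rw [integral_mul_const, integral_exp_mul_clippedRamp t₀ hη
    (le_add_of_nonneg_right (by positivity)) (le_add_of_nonneg_right (by positivity)),
    ← exp_nat_mul, show -η * (t₀ + i * δ - t₀) = i * (-η * δ) by ring,
    show -η * (t₀ + (i + 1) * δ - t₀) = i * (-η * δ) + -η * δ by ring, exp_add]
  ring

lemma summable_pow_mul_of_abs_le {r : ℝ} (hr₀ : 0 ≤ r) (hr₁ : r < 1) (hv : ∀ i, |v i| ≤ M) :
    Summable fun i ↦ r ^ i * v i :=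
  ((summable_geometric_of_lt_one hr₀ hr₁).mul_right M).of_norm_bounded fun i ↦ by
    rw [norm_mul, norm_pow, norm_of_nonneg hr₀, norm_eq_abs]
    exact mul_le_mul_of_nonneg_left (hv i) (pow_nonneg hr₀ i)

theorem integral_exp_mul_rampSeries (hη : 0 < η) (hδ : 0 < δ) (hv : ∀ i, |v i| ≤ M) :
    ∫ τ in Ioi t₀, exp (-η * (τ - t₀))
        * (x₀ + ∑' i : ℕ, clippedRamp (t₀ + i * δ) (t₀ + (i + 1) * δ) τ * v i)
      = x₀ / η + (1 - exp (-η * δ)) / η ^ 2 * ∑' i : ℕ, exp (-η * δ) ^ i * v i := by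
  have hr : exp (-η * δ) < 1 := exp_lt_one_iff.2 (by nlinarith)
  have hbound : IntegrableOn
      (fun τ ↦ exp (-η * (τ - t₀)) * |x₀| + M * (exp (-η * (τ - t₀)) * max (τ - t₀) 0))
      (Ioi t₀) :=
    ((integrableOn_exp_neg_mul_sub t₀ hη).mul_const _).add
      ((integrableOn_exp_mul_ramp t₀ t₀ hη).const_mul M)
  refine tendsto_nhds_unique (tendsto_integral_of_dominated_convergence _
    (fun n ↦ Continuous.aestronglyMeasurable (by fun_prop)) hbound (fun n ↦ ae_of_all _ fun τ ↦ ?_)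
    (ae_of_all _ fun τ ↦ ((summable_clippedRamp_mul hδ v t₀ τ).hasSum.tendsto_sum_nat.const_add
      x₀).const_mul _)) ?_
  · rw [norm_mul, norm_of_nonneg (exp_pos _).le, norm_eq_abs, mul_left_comm, ← mul_add]
    exact mul_le_mul_of_nonneg_left ((abs_add_le _ _).trans
      (add_le_add_right (abs_sum_clippedRamp_mul_le t₀ hδ.le hv τ n) _)) (exp_pos _).le
  · simp_rw [integral_exp_mul_sum_clippedRamp t₀ x₀ hη hδ.le]
    exact (((summable_pow_mul_of_abs_le (exp_pos _).le hr hv).hasSum.tendsto_sum_nat).const_mul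
      _).const_add _

end RampSeries

theorem one_sub_pow_mul_tsum_of_periodic {K : Type*} [Field K] [TopologicalSpace K]
    [IsTopologicalRing K] [T2Space K] {r : K} {v : ℕ → K} {C : ℕ} (hper : Function.Periodic v C)
    (hs : Summable fun i ↦ r ^ i * v i) :
    (1 - r ^ C) * ∑' i, r ^ i * v i = ∑ i ∈ Finset.range C, r ^ i * v i := by
  have hshift : ∑' i, r ^ (i + C) * v (i + C) = r ^ C * ∑' i, r ^ i * v i := by
    simp_rw [hper _, pow_add, mul_right_comm _ (r ^ C), mul_comm _ (r ^ C), tsum_mul_left]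
  linear_combination hshift - hs.sum_add_tsum_nat_add C

theorem stmt_11_general (η δ γ tk xzk : ℝ) (hη : 0 < η) (hδ : 0 < δ)
    (C : ℕ)
    (v : ℕ → ℝ) (hper : ∀ i, v (i + C) = v i) (hv : ∀ i, |v i| ≤ γ)
    (xz : ℝ → ℝ)
    (hxz : ∀ t, xz t = xzk + ∑' i : ℕ,
      (max (t - (tk + i * δ)) 0 - max (t - (tk + (i + 1) * δ)) 0) * v i)
    (xuk : ℝ)
    (hxuk : xuk = η * ∫ τ in Set.Ioi tk, Real.exp (-η * (τ - tk)) * xz τ) :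
    ∑ i ∈ Finset.range C, Real.exp (-(i : ℝ) * η * δ) * v i
      = η * ((1 - Real.exp (-(C : ℝ) * η * δ)) / (1 - Real.exp (-η * δ))) * (xuk - xzk) := by
  have hr : exp (-η * δ) < 1 := exp_lt_one_iff.2 (by nlinarith)
  have hpow (n : ℕ) : exp (-(n : ℝ) * η * δ) = exp (-η * δ) ^ n := by
    rw [← exp_nat_mul]
    ring_nf
  have hxu : xuk - xzk = (1 - exp (-η * δ)) / η * ∑' i : ℕ, exp (-η * δ) ^ i * v i := by
    have := integral_exp_mul_rampSeries tk xzk hη hδ hv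
    simp only [clippedRamp] at this
    simp_rw [hxuk, hxz, this]
    field_simp
    ring
  simp_rw [hpow]
  rw [← one_sub_pow_mul_tsum_of_periodic hper (summable_pow_mul_of_abs_le (exp_pos _).le hr hv),
    hxu]
  generalize exp (-η * δ) = r at hr ⊢
  field_simp [(sub_pos.2 hr).ne']

/-- Proposition 3, periodic-tail stability constraint: if the ZMP velocity
samples are `C`-periodic and bounded by `γ`, then
`Σ_{i=0}^{C−1} e^{−iηδ} v_i = η ((1 − e^{−Cηδ})/(1 − e^{−ηδ})) (x_u^k − x_z^k)`. -/
theorem stmt_11 (η δ γ tk xzk : ℝ) (hη : 0 < η) (hδ : 0 < δ) (hγ : 0 ≤ γ)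
    (C : ℕ) (hC : 0 < C)
    (v : ℕ → ℝ) (hper : ∀ i, v (i + C) = v i) (hv : ∀ i, |v i| ≤ γ)
    (xz : ℝ → ℝ)
    (hxz : ∀ t, xz t = xzk + ∑' i : ℕ,
      (max (t - (tk + i * δ)) 0 - max (t - (tk + (i + 1) * δ)) 0) * v i)
    (xuk : ℝ)
    (hxuk : xuk = η * ∫ τ in Set.Ioi tk, Real.exp (-η * (τ - tk)) * xz τ) :
    ∑ i ∈ Finset.range C, Real.exp (-(i : ℝ) * η * δ) * v i
      = η * ((1 - Real.exp (-(C : ℝ) * η * δ)) / (1 - Real.exp (-η * δ))) * (xuk - xzk) :=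
  stmt_11_general η δ γ tk xzk hη hδ C v hper hv xz hxz xuk hxuk
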